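/- The 5×5 matrix A(U) arising from the 1-D γ-based compressible multifluid system, with parameters γ > 1, u ∈ ℝ, p ∈ ℝ, c > 0 (given explicitly in terms of these), has characteristic polynomial with roots u − c, u, u, u, u + c; in particular, its eigenvalues are {u − c, u, u + c} with u of algebraic multiplicity 3. -/
import Mathlib

open Polynomial

noncomputable def multifluidA (γ u p c : ℝ) : Matrix (Fin 5) (Fin 5) ℝ :=
  !![0, 1, 0, 0, 0;
     (γ - 3) / 2 * u ^ 2, (3 - γ) * u, γ - 1, (1 - γ) * p, 1 - γ;
     u * c ^ 2 / (1 - γ) + (γ / 2 - 1) * u ^ 3,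
       c ^ 2 / (γ - 1) + (3 / 2 - γ) * u ^ 2, γ * u, (1 - γ) * p * u, (1 - γ) * u;
     0, 0, 0, u, 0;
     0, 0, 0, 0, u]

theorem multifluidA_charpoly (γ u p c : ℝ) (hγ : 1 < γ) (hc : 0 < c) :
    (multifluidA γ u p c).charpoly =
      (X - C (u - c)) * (X - C u) ^ 3 * (X - C (u + c)) := by
  have hγ1 : γ - 1 ≠ 0 := by linarith
  have hγ2 : (1:ℝ) - γ ≠ 0 := by linarith
  set B : Matrix (Fin 3) (Fin 3) ℝ :=
    !![0, 1, 0;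
       (γ - 3) / 2 * u ^ 2, (3 - γ) * u, γ - 1;
       u * c ^ 2 / (1 - γ) + (γ / 2 - 1) * u ^ 3,
         c ^ 2 / (γ - 1) + (3 / 2 - γ) * u ^ 2, γ * u] with hB
  set Cm : Matrix (Fin 3) (Fin 2) ℝ := !![0, 0; (1 - γ) * p, 1 - γ; (1 - γ) * p * u, (1 - γ) * u]
  set D : Matrix (Fin 2) (Fin 2) ℝ := !![u, 0; 0, u] with hD
  have hblock : multifluidA γ u p c =
      Matrix.reindex finSumFinEquiv finSumFinEquiv (Matrix.fromBlocks B Cm 0 D) := by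
    ext i j
    fin_cases i <;> fin_cases j <;> rfl
  rw [hblock, Matrix.charpoly_reindex, Matrix.charpoly_fromBlocks_zero₂₁]
  have hBcp : B.charpoly = (X - C (u - c)) * (X - C u) * (X - C (u + c)) := by
    apply Polynomial.funext
    intro x
    rw [Matrix.charpoly, ← Polynomial.coe_evalRingHom, RingHom.map_det]
    rw [Matrix.det_fin_three]
    simp [hB, Matrix.charmatrix_apply, Matrix.one_apply, Fin.val_eq_val]
    field_simp
    ring
  have hDcp : D.charpoly = (X - C u) ^ 2 := by
    rw [Matrix.charpoly, Matrix.det_fin_two]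
    simp [hD, Matrix.charmatrix_apply]
    ring
  rw [hBcp, hDcp]
  ring
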